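/- Let E and F be real Hilbert spaces and S : E → F a continuous linear map with closed range; let S* be its adjoint, N := (ker S)^⊥, B := sup{ ‖Su‖/‖u‖ : u ∈ N, u ≠ 0 } and γ := inf{ ‖Su‖/‖u‖ : u ∈ N, u ≠ 0 } (so γ > 0). Let ε > 0, let (λ_n)_{n≥0} be a sequence with λ_n ∈ [ε, 2B⁻² − ε] for all n, let s ∈ F, u⁽⁰⁾ ∈ E, and define u⁽ⁿ⁺¹⁾ := u⁽ⁿ⁾ + λ_n S*(s − S u⁽ⁿ⁾). Let w be the unique element of N with Sw = P_{ran(S)} s. Then (u⁽ⁿ⁾) converges in norm to u^∞ := w + P_{ker(S)} u⁽⁰⁾, with the linear rate ‖u⁽ⁿ⁾ − u^∞‖ ≤ (1 − ε γ²)ⁿ ‖u⁽⁰⁾ − u^∞‖ for all n ≥ 0; moreover u^∞ is the unique nearest point to u⁽⁰⁾ in the set M_s := {v ∈ E : ‖Sv − s‖ is minimal}. -/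

import Mathlib

/-!
As `S z = P_{ran S} s`, the limit `z := w + P_{ker S} u⁽⁰⁾` solves the normal equation
`S*(s - S z) = 0`, so the error `eₙ := u⁽ⁿ⁾ - z` obeys `eₙ₊₁ = (I - λₙ S*S) eₙ` and stays in
`(ker S)ᗮ`. There the symmetric operator `I - λₙ S*S` has quadratic form
`‖x‖² - λₙ‖Sx‖²` between `(1 - λₙB²)‖x‖²` and `(1 - λₙγ²)‖x‖²`; as the norm of a symmetric
operator is its numerical radius, `‖eₙ₊₁‖ ≤ (1 - εγ²)‖eₙ‖`, and `γ > 0` by the open mapping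
theorem. The least-squares solutions are exactly `z + ker S`, and `u⁽⁰⁾ - z ⊥ ker S`, so `z`
is the one nearest to `u⁽⁰⁾`.
-/

open scoped InnerProductSpace InnerProduct
open Filter Topology

namespace LinearMap.IsSymmetric

variable {𝕜 E : Type*} [RCLike 𝕜] [NormedAddCommGroup E] [InnerProductSpace 𝕜 E]
  {T : E →ₗ[𝕜] E} {c : ℝ}

theorem norm_apply_le_of_abs_re_inner_le [CompleteSpace E] (hT : T.IsSymmetric)
    (h : ∀ x, |RCLike.re ⟪T x, x⟫_𝕜| ≤ c * ‖x‖ ^ 2) (x : E) : ‖T x‖ ≤ c * ‖x‖ := by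
  rcases lt_or_ge c 0 with hc | hc
  · have hx : ‖x‖ ^ 2 ≤ 0 := by nlinarith [(abs_nonneg _).trans (h x)]
    obtain rfl : x = 0 := by simpa using hx
    simp
  set T' : E →L[𝕜] E := ⟨T, hT.continuous⟩
  have hT' : ‖T'‖ ≤ c := by
    rw [T'.norm_eq_iSup_rayleighQuotient hT]
    refine ciSup_le fun y => ?_
    rcases eq_or_ne y 0 with rfl | hy
    · simpa using hc
    rw [ContinuousLinearMap.rayleighQuotient, ContinuousLinearMap.reApplyInnerSelf_apply, abs_div,
      abs_sq, div_le_iff₀ (by positivity)]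
    exact h y
  exact (T'.le_opNorm x).trans (by gcongr)

theorem norm_apply_le_of_abs_re_inner_le_of_invariant (hT : T.IsSymmetric) {V : Submodule 𝕜 E}
    [CompleteSpace V] (hV : ∀ v ∈ V, T v ∈ V)
    (h : ∀ x ∈ V, |RCLike.re ⟪T x, x⟫_𝕜| ≤ c * ‖x‖ ^ 2) {x : E} (hx : x ∈ V) :
    ‖T x‖ ≤ c * ‖x‖ :=
  (hT.restrict_invariant hV).norm_apply_le_of_abs_re_inner_le (fun y => h y y.2) ⟨x, hx⟩

end LinearMap.IsSymmetric

section NormRatios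

variable {𝕜 E F : Type*} [NontriviallyNormedField 𝕜] [NormedAddCommGroup E] [NormedSpace 𝕜 E]
  [NormedAddCommGroup F] [NormedSpace 𝕜 F] (S : E →L[𝕜] F) (M : Submodule 𝕜 E)

def normRatios : Set ℝ := {r | ∃ u ∈ M, u ≠ 0 ∧ r = ‖S u‖ / ‖u‖}

variable {S M}

theorem bddAbove_normRatios : BddAbove (normRatios S M) := by
  refine ⟨‖S‖, ?_⟩
  rintro _ ⟨x, -, hx, rfl⟩
  rw [div_le_iff₀ (norm_pos_iff.mpr hx)]
  exact S.le_opNorm x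

theorem bddBelow_normRatios : BddBelow (normRatios S M) := by
  refine ⟨0, ?_⟩
  rintro _ ⟨x, -, -, rfl⟩
  positivity

theorem norm_apply_le_sSup_normRatios_mul {x : E} (hx : x ∈ M) :
    ‖S x‖ ≤ sSup (normRatios S M) * ‖x‖ := by
  rcases eq_or_ne x 0 with rfl | hx0
  · simp
  rw [← div_le_iff₀ (norm_pos_iff.mpr hx0)]
  exact le_csSup bddAbove_normRatios ⟨x, hx, hx0, rfl⟩

theorem sInf_normRatios_mul_le_norm_apply {x : E} (hx : x ∈ M) :
    sInf (normRatios S M) * ‖x‖ ≤ ‖S x‖ := by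
  rcases eq_or_ne x 0 with rfl | hx0
  · simp
  rw [← le_div_iff₀ (norm_pos_iff.mpr hx0)]
  exact csInf_le bddBelow_normRatios ⟨x, hx, hx0, rfl⟩

theorem le_sInf_normRatios {c : ℝ} (hne : (normRatios S M).Nonempty)
    (h : ∀ x ∈ M, c * ‖x‖ ≤ ‖S x‖) : c ≤ sInf (normRatios S M) := by
  refine le_csInf hne ?_
  rintro _ ⟨x, hx, hx0, rfl⟩
  rw [le_div_iff₀ (norm_pos_iff.mpr hx0)]
  exact h x hx

-- `sSup ∅ = 0` would turn the hypothesis into `ε ≤ -ε`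
theorem normRatios_nonempty_of_le_two_div_sq_sub {ε : ℝ} (hε : 0 < ε)
    (h : ε ≤ 2 / sSup (normRatios S M) ^ 2 - ε) : (normRatios S M).Nonempty := by
  by_contra hne
  rw [Set.not_nonempty_iff_eq_empty.mp hne, Real.sSup_empty] at h
  linarith

end NormRatios

namespace ContinuousLinearMap

section General

variable {𝕜 E F : Type*} [RCLike 𝕜] [NormedAddCommGroup E] [InnerProductSpace 𝕜 E] [CompleteSpace E]
  [NormedAddCommGroup F] [InnerProductSpace 𝕜 F] [CompleteSpace F] (S : E →L[𝕜] F)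

theorem adjoint_apply_mem_orthogonal_ker (y : F) : (S†) y ∈ S.kerᗮ :=
  S.orthogonal_ker ▸ Submodule.le_topologicalClosure _ ⟨y, rfl⟩

theorem exists_pos_mul_norm_le_norm_apply_of_isClosed_range (hS : IsClosed (Set.range S)) :
    ∃ C > 0, ∀ x ∈ S.kerᗮ, C * ‖x‖ ≤ ‖S x‖ := by
  set S' : S.kerᗮ →L[𝕜] F := S ∘L S.kerᗮ.subtypeL
  have hinj : Function.Injective S' := by
    refine (injective_iff_map_eq_zero S').2 fun x hx => ?_
    exact Subtype.ext (Submodule.inf_orthogonal_eq_bot S.ker |>.le ⟨hx, x.2⟩)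
  have hrange : Set.range S' = Set.range S := by
    refine subset_antisymm (by rintro _ ⟨x, rfl⟩; exact ⟨x, rfl⟩) ?_
    rintro _ ⟨x, rfl⟩
    refine ⟨⟨_, S.kerᗮ.starProjection_apply_mem x⟩, ?_⟩
    have hker : S (S.ker.starProjection x) = 0 := S.ker.starProjection_apply_mem x
    conv_rhs => rw [← S.ker.starProjection_add_starProjection_orthogonal x, map_add, hker, zero_add]
    rfl
  obtain ⟨K, hK⟩ := S'.antilipschitz_of_injective_of_isClosed_range hinj (hrange ▸ hS)
  refine ⟨(K + 1 : ℝ)⁻¹, by positivity, fun x hx => ?_⟩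
  rw [inv_mul_le_iff₀ (by positivity)]
  calc ‖x‖ ≤ K * ‖S x‖ := S'.bound_of_antilipschitz hK ⟨x, hx⟩
    _ ≤ (K + 1) * ‖S x‖ := by gcongr; linarith

theorem sInf_normRatios_orthogonal_ker_pos (hS : IsClosed (Set.range S))
    (hne : (normRatios S S.kerᗮ).Nonempty) : 0 < sInf (normRatios S S.kerᗮ) := by
  obtain ⟨C, hC, hCS⟩ := S.exists_pos_mul_norm_le_norm_apply_of_isClosed_range hS
  exact hC.trans_le (le_sInf_normRatios hne hCS)

end General

section LeastSquares

variable {E F : Type*} [NormedAddCommGroup E] [InnerProductSpace ℝ E] [CompleteSpace E]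
  [NormedAddCommGroup F] [InnerProductSpace ℝ F] [CompleteSpace F] (S : E →L[ℝ] F)
  {s : F} {z : E}

theorem adjoint_apply_sub_eq_zero_of_apply_eq_starProjection [S.range.HasOrthogonalProjection]
    (hz : S z = S.range.starProjection s) : (S†) (s - S z) = 0 := by
  have h := S.orthogonal_range ▸ S.range.sub_starProjection_mem_orthogonal s
  rwa [hz]

theorem norm_apply_sub_sq_eq_of_adjoint_apply_sub_eq_zero (hz : (S†) (s - S z) = 0) (v : E) :
    ‖S v - s‖ ^ 2 = ‖S v - S z‖ ^ 2 + ‖S z - s‖ ^ 2 := by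
  have horth : ⟪S v - S z, S z - s⟫_ℝ = 0 := by
    rw [← map_sub, ← adjoint_inner_right, ← neg_sub s, map_neg, hz, neg_zero, inner_zero_right]
  simpa only [sq, sub_add_sub_cancel] using norm_add_sq_eq_norm_sq_add_norm_sq_real horth

theorem norm_apply_sub_le_of_adjoint_apply_sub_eq_zero (hz : (S†) (s - S z) = 0) (v : E) :
    ‖S z - s‖ ≤ ‖S v - s‖ := by
  refine le_of_pow_le_pow_left₀ two_ne_zero (norm_nonneg _) ?_
  rw [S.norm_apply_sub_sq_eq_of_adjoint_apply_sub_eq_zero hz v]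
  exact le_add_of_nonneg_left (sq_nonneg _)

theorem apply_eq_of_adjoint_apply_sub_eq_zero (hz : (S†) (s - S z) = 0) {v : E}
    (hv : ∀ v', ‖S v - s‖ ≤ ‖S v' - s‖) : S v = S z := by
  have h := S.norm_apply_sub_sq_eq_of_adjoint_apply_sub_eq_zero hz v
  have : ‖S v - S z‖ ^ 2 ≤ 0 := by nlinarith [hv z, norm_nonneg (S v - s), norm_nonneg (S z - s)]
  rwa [sq_nonpos_iff, norm_eq_zero, sub_eq_zero] at this

theorem norm_sub_lt_of_adjoint_apply_sub_eq_zero (hz : (S†) (s - S z) = 0) {x v : E}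
    (hx : x - z ∈ S.kerᗮ) (hv : ∀ v', ‖S v - s‖ ≤ ‖S v' - s‖) (hne : v ≠ z) :
    ‖x - z‖ < ‖x - v‖ := by
  have hker : v - z ∈ S.ker := by
    rw [LinearMap.mem_ker, coe_coe, map_sub, S.apply_eq_of_adjoint_apply_sub_eq_zero hz hv,
      sub_self]
  have hpyth :=
    norm_sub_sq_eq_norm_sq_add_norm_sq_real (Submodule.inner_left_of_mem_orthogonal hker hx)
  rw [sub_sub_sub_cancel_right] at hpyth
  have hpos : 0 < ‖v - z‖ := norm_pos_iff.mpr (sub_ne_zero.mpr hne)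
  nlinarith [norm_nonneg (x - z), norm_nonneg (x - v)]

end LeastSquares

end ContinuousLinearMap

section Landweber

open ContinuousLinearMap

variable {E F : Type*} [NormedAddCommGroup E] [InnerProductSpace ℝ E] [CompleteSpace E]
  [NormedAddCommGroup F] [InnerProductSpace ℝ F] [CompleteSpace F] {S : E →L[ℝ] F}

theorem one_sub_mul_sq_mem_Ico {B γ ε : ℝ} (hε : 0 < ε) (hγ : 0 < γ) (hγB : γ ≤ B)
    (h : ε ≤ 2 / B ^ 2 - ε) : 1 - ε * γ ^ 2 ∈ Set.Ico 0 1 := by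
  have hεB : ε * B ^ 2 ≤ 1 := by
    rw [le_sub_iff_add_le, le_div_iff₀ (by nlinarith [hγ.trans_le hγB])] at h
    linarith
  constructor
  · nlinarith [mul_le_mul_of_nonneg_left (pow_le_pow_left₀ hγ.le hγB 2) hε.le]
  · nlinarith [mul_pos hε (pow_pos hγ 2)]

theorem norm_sub_smul_adjoint_apply_apply_le {B γ ε l : ℝ} (hε : 0 < ε) (hl : ε ≤ l)
    (hl' : l ≤ 2 / B ^ 2 - ε) (hγ : 0 ≤ γ) (hSγ : ∀ x ∈ S.kerᗮ, γ * ‖x‖ ≤ ‖S x‖)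
    (hSB : ∀ x ∈ S.kerᗮ, ‖S x‖ ≤ B * ‖x‖) {x : E} (hx : x ∈ S.kerᗮ) :
    ‖x - l • (S†) (S x)‖ ≤ (1 - ε * γ ^ 2) * ‖x‖ := by
  set T : E →ₗ[ℝ] E := LinearMap.id - l • ((S† ∘L S : E →L[ℝ] E) : E →ₗ[ℝ] E)
  have hTx (y : E) : T y = y - l • (S†) (S y) := rfl
  have hT : T.IsSymmetric := fun y y' => by
    simp only [hTx, inner_sub_left, inner_sub_right, real_inner_smul_left, real_inner_smul_right,
      adjoint_inner_left, adjoint_inner_right]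
  have hinv : ∀ y ∈ S.kerᗮ, T y ∈ S.kerᗮ := fun y hy =>
    S.kerᗮ.sub_mem hy (S.kerᗮ.smul_mem l (S.adjoint_apply_mem_orthogonal_ker _))
  refine hT.norm_apply_le_of_abs_re_inner_le_of_invariant hinv (fun y hy => ?_) hx
  have hinner : ⟪T y, y⟫_ℝ = ‖y‖ ^ 2 - l * ‖S y‖ ^ 2 := by
    rw [hTx, inner_sub_left, real_inner_smul_left, adjoint_inner_left, real_inner_self_eq_norm_sq,
      real_inner_self_eq_norm_sq]
  have hlow : γ ^ 2 * ‖y‖ ^ 2 ≤ ‖S y‖ ^ 2 := by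
    rw [← mul_pow]; exact pow_le_pow_left₀ (by positivity) (hSγ y hy) 2
  have hup : ‖S y‖ ^ 2 ≤ B ^ 2 * ‖y‖ ^ 2 := by
    rw [← mul_pow]; exact pow_le_pow_left₀ (norm_nonneg _) (hSB y hy) 2
  have hB : B ^ 2 ≠ 0 := by
    rintro h; rw [h, div_zero] at hl'; linarith
  have hlB : l * B ^ 2 ≤ 2 - ε * B ^ 2 := by
    have := mul_le_mul_of_nonneg_right hl' (sq_nonneg B)
    rwa [sub_mul, div_mul_cancel₀ _ hB] at this
  rw [RCLike.re_to_real, hinner, abs_le]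
  constructor <;> nlinarith [sq_nonneg ‖y‖, sq_nonneg ‖S y‖]

variable {lam : ℕ → ℝ} {s : F} {u : ℕ → E} {z : E}

theorem landweber_sub_eq (hrec : ∀ n, u (n + 1) = u n + lam n • (S†) (s - S (u n)))
    (hz : (S†) (s - S z) = 0) (n : ℕ) :
    u (n + 1) - z = (u n - z) - lam n • (S†) (S (u n - z)) := by
  have hres : s - S (u n) = (s - S z) - S (u n - z) := by rw [map_sub]; abel
  rw [hrec n, hres, map_sub, hz, zero_sub, smul_neg]
  abel

theorem landweber_sub_mem_orthogonal_ker
    (hrec : ∀ n, u (n + 1) = u n + lam n • (S†) (s - S (u n))) (hz : (S†) (s - S z) = 0)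
    (h0 : u 0 - z ∈ S.kerᗮ) (n : ℕ) : u n - z ∈ S.kerᗮ := by
  induction n with
  | zero => exact h0
  | succ n ih =>
    rw [landweber_sub_eq hrec hz]
    exact S.kerᗮ.sub_mem ih (S.kerᗮ.smul_mem _ (S.adjoint_apply_mem_orthogonal_ker _))

end Landweber

theorem tendsto_of_norm_sub_le_pow_mul {E : Type*} [SeminormedAddCommGroup E] {u : ℕ → E} {a : E}
    {c C : ℝ} (hc0 : 0 ≤ c) (hc1 : c < 1) (h : ∀ n, ‖u n - a‖ ≤ c ^ n * C) :
    Tendsto u atTop (𝓝 a) := by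
  rw [tendsto_iff_norm_sub_tendsto_zero]
  refine squeeze_zero (fun n => norm_nonneg _) h ?_
  simpa using (tendsto_pow_atTop_nhds_zero_of_lt_one hc0 hc1).mul_const C

/-- Generalized frame algorithm. For a bounded operator
`S : E → F` with closed range, `K := ker S`, `B` and `γ` the supremum and
infimum of `‖S u‖/‖u‖` over nonzero `u ∈ Kᗮ`, relaxation coefficients
`λ_n ∈ [ε, 2B⁻² - ε]`, and iteration `u⁽ⁿ⁺¹⁾ = u⁽ⁿ⁾ + λ_n S*(s - S u⁽ⁿ⁾)`:
if `w` is the (unique) element of `Kᗮ` with `S w = P_{ran S} s`, then `u⁽ⁿ⁾`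
converges in norm to `u^∞ := w + P_K u⁽⁰⁾` at the linear rate
`‖u⁽ⁿ⁾ - u^∞‖ ≤ (1 - εγ²)ⁿ ‖u⁽⁰⁾ - u^∞‖`, and `u^∞` is the unique nearest
point to `u⁽⁰⁾` in the set of least-squares solutions `M_s`. -/
theorem generalized_frame_algorithm_converges
    {E F : Type*} [NormedAddCommGroup E] [InnerProductSpace ℝ E] [CompleteSpace E]
    [NormedAddCommGroup F] [InnerProductSpace ℝ F] [CompleteSpace F]
    (S : E →L[ℝ] F)
    (Rn : Submodule ℝ F) [CompleteSpace Rn] (hRn : Rn = LinearMap.range (S : E →ₗ[ℝ] F))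
    (K : Submodule ℝ E) [CompleteSpace K] (hK : K = LinearMap.ker (S : E →ₗ[ℝ] F))
    (B γ : ℝ)
    (hB : B = sSup {r : ℝ | ∃ u ∈ Kᗮ, u ≠ 0 ∧ r = ‖S u‖ / ‖u‖})
    (hγ : γ = sInf {r : ℝ | ∃ u ∈ Kᗮ, u ≠ 0 ∧ r = ‖S u‖ / ‖u‖})
    (ε : ℝ) (hε : 0 < ε)
    (lam : ℕ → ℝ) (hlam : ∀ n, ε ≤ lam n ∧ lam n ≤ 2 / B ^ 2 - ε)
    (s : F) (u : ℕ → E)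
    (hrec : ∀ n, u (n+1) = u n + lam n • (ContinuousLinearMap.adjoint S) (s - S (u n)))
    (w : E) (hw : w ∈ Kᗮ) (hws : S w = (Submodule.orthogonalProjectionOnto Rn s : F)) :
    Filter.Tendsto u Filter.atTop (nhds (w + (Submodule.orthogonalProjectionOnto K (u 0) : E))) ∧
    (∀ n : ℕ, ‖u n - (w + (Submodule.orthogonalProjectionOnto K (u 0) : E))‖
        ≤ (1 - ε * γ ^ 2) ^ n * ‖u 0 - (w + (Submodule.orthogonalProjectionOnto K (u 0) : E))‖) ∧
    (∀ v : E, ‖S (w + (Submodule.orthogonalProjectionOnto K (u 0) : E)) - s‖ ≤ ‖S v - s‖) ∧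
    (∀ v : E, (∀ v' : E, ‖S v - s‖ ≤ ‖S v' - s‖) →
      v ≠ w + (Submodule.orthogonalProjectionOnto K (u 0) : E) →
      ‖u 0 - (w + (Submodule.orthogonalProjectionOnto K (u 0) : E))‖ < ‖u 0 - v‖) := by
  subst hRn hK
  change B = sSup (normRatios S S.kerᗮ) at hB
  change γ = sInf (normRatios S S.kerᗮ) at hγ
  set z := w + (Submodule.orthogonalProjectionOnto S.ker (u 0) : E)
  have hnormal : (S†) (s - S z) = 0 := by
    refine S.adjoint_apply_sub_eq_zero_of_apply_eq_starProjection ?_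
    have hPK : S (S.ker.starProjection (u 0)) = 0 := S.ker.starProjection_apply_mem (u 0)
    rw [map_add, hws]
    exact add_eq_left.mpr hPK
  have h0 : u 0 - z ∈ S.kerᗮ := by
    rw [show u 0 - z = (u 0 - S.ker.starProjection (u 0)) - w by simp only [z]; abel]
    exact S.kerᗮ.sub_mem (S.ker.sub_starProjection_mem_orthogonal _) hw
  have hne : (normRatios S S.kerᗮ).Nonempty :=
    normRatios_nonempty_of_le_two_div_sq_sub hε (hB ▸ (hlam 0).1.trans (hlam 0).2)
  have hclosed : IsClosed (Set.range S) := (completeSpace_coe_iff_isComplete.mp ‹_›).isClosed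
  have hγ0 : 0 < γ := hγ ▸ S.sInf_normRatios_orthogonal_ker_pos hclosed hne
  have hγB : γ ≤ B := hγ ▸ hB ▸ csInf_le_csSup hne bddBelow_normRatios bddAbove_normRatios
  obtain ⟨hc0, hc1⟩ := one_sub_mul_sq_mem_Ico hε hγ0 hγB ((hlam 0).1.trans (hlam 0).2)
  have hstep (n : ℕ) : ‖u (n + 1) - z‖ ≤ (1 - ε * γ ^ 2) * ‖u n - z‖ := by
    rw [landweber_sub_eq hrec hnormal]
    exact norm_sub_smul_adjoint_apply_apply_le hε (hlam n).1 (hlam n).2 hγ0.le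
      (fun x hx => hγ ▸ sInf_normRatios_mul_le_norm_apply hx)
      (fun x hx => hB ▸ norm_apply_le_sSup_normRatios_mul hx)
      (landweber_sub_mem_orthogonal_ker hrec hnormal h0 n)
  have hrate (n : ℕ) : ‖u n - z‖ ≤ (1 - ε * γ ^ 2) ^ n * ‖u 0 - z‖ :=
    le_geom (u := fun n => ‖u n - z‖) hc0 n fun k _ => hstep k
  exact ⟨tendsto_of_norm_sub_le_pow_mul hc0 hc1 hrate, hrate,
    S.norm_apply_sub_le_of_adjoint_apply_sub_eq_zero hnormal,
    fun v hv hne => S.norm_sub_lt_of_adjoint_apply_sub_eq_zero hnormal h0 hv hne⟩
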